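/- (Main result: large penalties yield safe and constrained-optimal maximizers.) Assume X_F is absorbing (f(x,a) ∈ X_F whenever x ∈ X_F) and nonempty, r(x,a) = 0 whenever x ∈ X_F, X_V and X_U are nonempty, and the bounded time-to-failure assumption holds with bound T_f. Define p* = (R_{X_U} · (1 − γ^{T_f+1})/(1 − γ) + (R_{Q_U} − R_{Q_V})/γ − sInf {V(x) | x ∈ X_V}) / γ^{T_f}. Then for every p with p ≥ 0 and p > p*, and for every x ∈ X_V, every controller u with G(x,u) − p·ρ(x,u) = V_p(x) is safe for x and satisfies G(x,u) = V(x). -/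

import Mathlib

/-!
If a maximizer `u` of the penalized objective at a viable state `x` ever failed, its trajectory
would leave the viability kernel. At the last viable state the rest of the run lies in the
unviability kernel, so by bounded time to failure it collects at most
`R_{X_U} (1 - γ^{T_f+1}) / (1 - γ)` and incurs risk at least `γ^{T_f}`; for `p > p*` this pushes
the penalized return below `R_{Q_V} + γ inf_{X_V} V ≤ V`. The Bellman inequality
`r(x,a) + γ V(f(x,a)) ≤ V(x)` carries the strict bound `G - p ρ < V` back to `x`, contradicting
`V(x) ≤ V_p(x)`. So `u` is safe, its risk vanishes, and `G(x,u) = V_p(x) ≥ V(x) ≥ G(x,u)`.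

The Bellman inequality needs care because controllers are stationary: "play `a` at `x`, then
follow `u'`" is `Function.update u' x a`. If the `u'`-trajectory from `f x a` never returns to `x`
this is a genuine concatenation; otherwise it is periodic, and `r(x,a) + γ G(f(x,a), u')` is a
convex combination of the returns from `x` of two safe controllers.
-/

open Set

noncomputable section

/-- Trajectory of the discrete-time system `x_{t+1} = f(x_t, u(x_t))` starting at `x`. -/
def traj {X U : Type*} (f : X → U → X) (u : X → U) (x : X) : ℕ → X
  | 0 => x
  | t + 1 => f (traj f u x t) (u (traj f u x t))

/-- The controller `u` is safe for the state `x`: the trajectory never enters the failure set. -/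
def SafeFor {X U : Type*} (f : X → U → X) (XF : Set X) (u : X → U) (x : X) : Prop :=
  ∀ t : ℕ, traj f u x t ∉ XF

/-- The viability kernel: states from which some controller avoids failure forever. -/
def viab {X U : Type*} (f : X → U → X) (XF : Set X) : Set X :=
  {x | ∃ u : X → U, SafeFor f XF u x}

/-- Discounted return `G(x,u)`. -/
def ret {X U : Type*} (γ : ℝ) (f : X → U → X) (r : X → U → ℝ) (x : X) (u : X → U) : ℝ :=
  ∑' t : ℕ, γ ^ t * r (traj f u x t) (u (traj f u x t))

/-- Discounted risk `ρ(x,u)`. -/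
def risk {X U : Type*} (γ : ℝ) (f : X → U → X) (XF : Set X) (x : X) (u : X → U) : ℝ :=
  ∑' t : ℕ, γ ^ t * XF.indicator (fun _ => (1 : ℝ)) (traj f u x t)

/-- Penalized value function `V_p(x)`. -/
def Vpen {X U : Type*} (γ : ℝ) (f : X → U → X) (XF : Set X) (r : X → U → ℝ) (p : ℝ)
    (x : X) : ℝ :=
  ⨆ u : X → U, (ret γ f r x u - p * risk γ f XF x u)

/-- Constrained value function `V(x)`: supremum of the return over safe controllers. -/
def Vcon {X U : Type*} (γ : ℝ) (f : X → U → X) (XF : Set X) (r : X → U → ℝ) (x : X) : ℝ :=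
  ⨆ u : {u : X → U // SafeFor f XF u x}, ret γ f r x (u : X → U)

/-- `R_{Q_V}`: infimum of the reward over state-control pairs transitioning into the kernel. -/
def RQV {X U : Type*} (f : X → U → X) (XF : Set X) (r : X → U → ℝ) : ℝ :=
  sInf {y : ℝ | ∃ q : X × U, f q.1 q.2 ∈ viab f XF ∧ y = r q.1 q.2}

/-- `R_{Q_U}`: supremum of the reward over state-control pairs transitioning out of the kernel. -/
def RQU {X U : Type*} (f : X → U → X) (XF : Set X) (r : X → U → ℝ) : ℝ :=
  sSup {y : ℝ | ∃ q : X × U, f q.1 q.2 ∉ viab f XF ∧ y = r q.1 q.2}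

/-- `R_{X_U}`: supremum of the reward over the unviability kernel. -/
def RXU {X U : Type*} (f : X → U → X) (XF : Set X) (r : X → U → ℝ) : ℝ :=
  sSup {y : ℝ | ∃ x, x ∉ viab f XF ∧ ∃ a : U, y = r x a}

/-- `inf_{X_V} V`: infimum of the constrained value function over the viability kernel. -/
def infV {X U : Type*} (γ : ℝ) (f : X → U → X) (XF : Set X) (r : X → U → ℝ) : ℝ :=
  sInf {y : ℝ | ∃ x ∈ viab f XF, y = Vcon γ f XF r x}

/-- `sup_{X_U} V_p`: supremum of the penalized value function over the unviability kernel. -/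
def supVp {X U : Type*} (γ : ℝ) (f : X → U → X) (XF : Set X) (r : X → U → ℝ) (p : ℝ) : ℝ :=
  sSup {y : ℝ | ∃ x, x ∉ viab f XF ∧ y = Vpen γ f XF r p x}

section Trajectory

variable {X U : Type*} {f : X → U → X} {XF : Set X} {u v : X → U} {x y : X}

theorem traj_eq_iterate (f : X → U → X) (u : X → U) (x : X) (t : ℕ) :
    traj f u x t = (fun y => f y (u y))^[t] x := by
  induction t with
  | zero => rfl
  | succ t ih => rw [Function.iterate_succ_apply', ← ih]; rfl

theorem traj_add (f : X → U → X) (u : X → U) (x : X) (s t : ℕ) :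
    traj f u x (s + t) = traj f u (traj f u x s) t := by
  simp only [traj_eq_iterate, add_comm s t, Function.iterate_add_apply]

theorem traj_succ' (f : X → U → X) (u : X → U) (x : X) (t : ℕ) :
    traj f u x (t + 1) = traj f u (f x (u x)) t := by
  rw [add_comm, traj_add]; rfl

theorem traj_mem_of_mapsTo {S : Set X} (hS : Set.MapsTo (fun y => f y (u y)) S S) (hx : x ∈ S)
    (t : ℕ) : traj f u x t ∈ S := by
  rw [traj_eq_iterate]; exact hS.iterate t hx

theorem traj_eq_of_eqOn {n : ℕ} (h : ∀ s < n, v (traj f u y s) = u (traj f u y s)) :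
    traj f v y n = traj f u y n := by
  induction n with
  | zero => rfl
  | succ n ih =>
    rw [traj, traj, ih fun s hs => h s (hs.trans n.lt_succ_self), h n n.lt_succ_self]

theorem SafeFor.shift (h : SafeFor f XF u x) (s : ℕ) : SafeFor f XF u (traj f u x s) :=
  fun t => traj_add f u x s t ▸ h (s + t)

theorem notMem_of_mem_viab (hx : x ∈ viab f XF) : x ∉ XF :=
  let ⟨_, hu⟩ := hx; hu 0

theorem SafeFor.update [DecidableEq X] {a : U} (hxF : x ∉ XF) (hu : SafeFor f XF u (f x a)) :
    SafeFor f XF (Function.update u x a) x := by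
  set S := insert x (Set.range (traj f u (f x a)))
  have hxS : f x (Function.update u x a x) ∈ S := by
    rw [Function.update_self]; exact Or.inr ⟨0, rfl⟩
  have hS : Set.MapsTo (fun y => f y (Function.update u x a y)) S S := by
    rintro _ (rfl | ⟨s, rfl⟩)
    · exact hxS
    · by_cases hs : traj f u (f x a) s = x
      · rw [hs]; exact hxS
      · simp only [Function.update_of_ne hs]; exact Or.inr ⟨s + 1, rfl⟩
  intro t
  rcases traj_mem_of_mapsTo hS (Set.mem_insert x _) t with h | ⟨s, h⟩
  · rw [h]; exact hxF
  · rw [← h]; exact hu s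

theorem mem_viab_of_next_mem {a : U} (hxF : x ∉ XF) (h : f x a ∈ viab f XF) : x ∈ viab f XF := by
  classical
  obtain ⟨u, hu⟩ := h
  exact ⟨_, hu.update hxF⟩

theorem next_notMem_viab (habs : ∀ x ∈ XF, ∀ a : U, f x a ∈ XF) (hx : x ∉ viab f XF) (a : U) :
    f x a ∉ viab f XF := fun h => by
  by_cases hxF : x ∈ XF
  · exact notMem_of_mem_viab h (habs x hxF a)
  · exact hx (mem_viab_of_next_mem hxF h)

theorem traj_notMem_viab (habs : ∀ x ∈ XF, ∀ a : U, f x a ∈ XF) (hx : x ∉ viab f XF)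
    (u : X → U) (t : ℕ) : traj f u x t ∉ viab f XF :=
  traj_mem_of_mapsTo (S := (viab f XF)ᶜ) (fun _ hy => next_notMem_viab habs hy _) hx t

theorem traj_mem_of_le (habs : ∀ x ∈ XF, ∀ a : U, f x a ∈ XF) {s t : ℕ}
    (hs : traj f u x s ∈ XF) (hst : s ≤ t) : traj f u x t ∈ XF := by
  obtain ⟨d, rfl⟩ := Nat.exists_eq_add_of_le hst
  rw [traj_add]
  exact traj_mem_of_mapsTo (fun y hy => habs y hy _) hs d

end Trajectory

section DiscountedSum

variable {γ C : ℝ} {g : ℕ → ℝ}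

theorem norm_pow_mul_le (hγ0 : 0 ≤ γ) (hg : ∀ t, |g t| ≤ C) (t : ℕ) :
    ‖γ ^ t * g t‖ ≤ γ ^ t * C := by
  rw [norm_mul, norm_pow, Real.norm_of_nonneg hγ0, Real.norm_eq_abs]
  exact mul_le_mul_of_nonneg_left (hg t) (pow_nonneg hγ0 t)

theorem summable_pow_mul_of_abs_le (hγ0 : 0 ≤ γ) (hγ1 : γ < 1) (hg : ∀ t, |g t| ≤ C) :
    Summable fun t => γ ^ t * g t :=
  .of_norm_bounded ((summable_geometric_of_lt_one hγ0 hγ1).mul_right C) (norm_pow_mul_le hγ0 hg)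

theorem abs_tsum_pow_mul_le (hγ0 : 0 ≤ γ) (hγ1 : γ < 1) (hg : ∀ t, |g t| ≤ C) :
    |∑' t, γ ^ t * g t| ≤ C / (1 - γ) := by
  rw [div_eq_inv_mul]
  exact tsum_of_norm_bounded ((hasSum_geometric_of_lt_one hγ0 hγ1).mul_right C)
    (norm_pow_mul_le hγ0 hg)

theorem tsum_pow_mul_eq_sum_add (hγ0 : 0 ≤ γ) (hγ1 : γ < 1) (hg : ∀ t, |g t| ≤ C) (n : ℕ) :
    ∑' t, γ ^ t * g t
      = ∑ t ∈ Finset.range n, γ ^ t * g t + γ ^ n * ∑' t, γ ^ t * g (t + n) := by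
  rw [← (summable_pow_mul_of_abs_le hγ0 hγ1 hg).sum_add_tsum_nat_add n, ← tsum_mul_left]
  congr 1
  exact tsum_congr fun t => by ring

end DiscountedSum

section ReturnAndRisk

variable {X U : Type*} {f : X → U → X} {XF : Set X} {r : X → U → ℝ} {γ C : ℝ}
  {u v : X → U} {x y : X}

theorem ret_eq_sum_add (hγ0 : 0 ≤ γ) (hγ1 : γ < 1) (hC : ∀ x a, |r x a| ≤ C) (n : ℕ) :
    ret γ f r x u = ∑ t ∈ Finset.range n, γ ^ t * r (traj f u x t) (u (traj f u x t))
      + γ ^ n * ret γ f r (traj f u x n) u := by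
  rw [ret, ret, tsum_pow_mul_eq_sum_add hγ0 hγ1 (fun t => hC _ _) n]
  simp only [add_comm _ n, traj_add]

theorem ret_succ (hγ0 : 0 ≤ γ) (hγ1 : γ < 1) (hC : ∀ x a, |r x a| ≤ C) :
    ret γ f r x u = r x (u x) + γ * ret γ f r (f x (u x)) u := by
  simpa [traj] using ret_eq_sum_add (f := f) (x := x) (u := u) hγ0 hγ1 hC 1

theorem abs_ret_le (hγ0 : 0 ≤ γ) (hγ1 : γ < 1) (hC : ∀ x a, |r x a| ≤ C) :
    |ret γ f r x u| ≤ C / (1 - γ) :=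
  abs_tsum_pow_mul_le hγ0 hγ1 fun _ => hC _ _

theorem abs_indicator_one_le (S : Set X) (y : X) : |S.indicator (fun _ => (1 : ℝ)) y| ≤ 1 := by
  by_cases hy : y ∈ S <;> simp [hy]

theorem risk_eq_sum_add (hγ0 : 0 ≤ γ) (hγ1 : γ < 1) (n : ℕ) :
    risk γ f XF x u
      = ∑ t ∈ Finset.range n, γ ^ t * XF.indicator (fun _ => (1 : ℝ)) (traj f u x t)
      + γ ^ n * risk γ f XF (traj f u x n) u := by
  rw [risk, risk, tsum_pow_mul_eq_sum_add hγ0 hγ1 (fun t => abs_indicator_one_le _ _) n]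
  simp only [add_comm _ n, traj_add]

theorem risk_succ (hγ0 : 0 ≤ γ) (hγ1 : γ < 1) :
    risk γ f XF x u = XF.indicator (fun _ => (1 : ℝ)) x + γ * risk γ f XF (f x (u x)) u := by
  simpa [traj] using risk_eq_sum_add (f := f) (XF := XF) (x := x) (u := u) hγ0 hγ1 1

theorem risk_nonneg (hγ0 : 0 ≤ γ) : 0 ≤ risk γ f XF x u :=
  tsum_nonneg fun t =>
    mul_nonneg (pow_nonneg hγ0 t) (Set.indicator_nonneg (fun _ _ => zero_le_one) _)

theorem risk_eq_zero_of_safeFor (h : SafeFor f XF u x) : risk γ f XF x u = 0 := by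
  simp [risk, Set.indicator_of_notMem (h _)]

theorem risk_eq_of_mem (hγ0 : 0 ≤ γ) (hγ1 : γ < 1) (habs : ∀ x ∈ XF, ∀ a : U, f x a ∈ XF)
    (hx : x ∈ XF) : risk γ f XF x u = (1 - γ)⁻¹ := by
  have hfail (t : ℕ) : γ ^ t * XF.indicator (fun _ => (1 : ℝ)) (traj f u x t) = γ ^ t := by
    rw [Set.indicator_of_mem (traj_mem_of_le (s := 0) habs hx t.zero_le), mul_one]
  rw [risk, tsum_congr hfail, tsum_geometric_of_lt_one hγ0 hγ1]

theorem pow_div_le_risk (hγ0 : 0 ≤ γ) (hγ1 : γ < 1) (habs : ∀ x ∈ XF, ∀ a : U, f x a ∈ XF)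
    {s : ℕ} (hs : traj f u x s ∈ XF) : γ ^ s / (1 - γ) ≤ risk γ f XF x u := by
  rw [risk_eq_sum_add hγ0 hγ1 s, risk_eq_of_mem hγ0 hγ1 habs hs, div_eq_mul_inv]
  exact le_add_of_nonneg_left <| Finset.sum_nonneg fun t _ =>
    mul_nonneg (pow_nonneg hγ0 t) (Set.indicator_nonneg (fun _ _ => zero_le_one) _)

theorem ret_sub_mul_risk_succ (hγ0 : 0 ≤ γ) (hγ1 : γ < 1) (hC : ∀ x a, |r x a| ≤ C)
    (hxF : x ∉ XF) (p : ℝ) :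
    ret γ f r x u - p * risk γ f XF x u
      = r x (u x) + γ * (ret γ f r (f x (u x)) u - p * risk γ f XF (f x (u x)) u) := by
  rw [ret_succ hγ0 hγ1 hC, risk_succ hγ0 hγ1, Set.indicator_of_notMem hxF]
  ring

theorem ret_eq_of_eqOn (h : ∀ s, v (traj f u y s) = u (traj f u y s)) :
    ret γ f r y v = ret γ f r y u :=
  tsum_congr fun t => by rw [traj_eq_of_eqOn fun s _ => h s, h t]

theorem ret_sub_ret_eq_of_eqOn (hγ0 : 0 ≤ γ) (hγ1 : γ < 1) (hC : ∀ x a, |r x a| ≤ C) {n : ℕ}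
    (h : ∀ s < n, v (traj f u y s) = u (traj f u y s)) :
    ret γ f r y v - ret γ f r y u
      = γ ^ n * (ret γ f r (traj f u y n) v - ret γ f r (traj f u y n) u) := by
  have hsum : ∑ t ∈ Finset.range n, γ ^ t * r (traj f v y t) (v (traj f v y t))
      = ∑ t ∈ Finset.range n, γ ^ t * r (traj f u y t) (u (traj f u y t)) :=
    Finset.sum_congr rfl fun t ht => by
      have ht := Finset.mem_range.1 ht
      rw [traj_eq_of_eqOn fun s hs => h s (hs.trans ht), h t ht]
  rw [ret_eq_sum_add (x := y) (u := v) hγ0 hγ1 hC n, ret_eq_sum_add (x := y) (u := u) hγ0 hγ1 hC n,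
    hsum, traj_eq_of_eqOn h]
  ring

end ReturnAndRisk

section ValueFunctions

variable {X U : Type*} {f : X → U → X} {XF : Set X} {r : X → U → ℝ} {γ C : ℝ}
  {u : X → U} {x : X} {a : U}

theorem bddAbove_ret_safeFor (hγ0 : 0 ≤ γ) (hγ1 : γ < 1) (hC : ∀ x a, |r x a| ≤ C) (x : X) :
    BddAbove (Set.range fun u : {u : X → U // SafeFor f XF u x} => ret γ f r x u) :=
  ⟨C / (1 - γ), by rintro _ ⟨u, rfl⟩; exact (abs_le.1 (abs_ret_le hγ0 hγ1 hC)).2⟩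

theorem ret_le_Vcon (hγ0 : 0 ≤ γ) (hγ1 : γ < 1) (hC : ∀ x a, |r x a| ≤ C)
    (hu : SafeFor f XF u x) : ret γ f r x u ≤ Vcon γ f XF r x :=
  le_ciSup (bddAbove_ret_safeFor hγ0 hγ1 hC x) ⟨u, hu⟩

theorem Vcon_le_Vpen (hγ0 : 0 ≤ γ) (hγ1 : γ < 1) (hC : ∀ x a, |r x a| ≤ C) {p : ℝ}
    (hp : 0 ≤ p) (hx : x ∈ viab f XF) : Vcon γ f XF r x ≤ Vpen γ f XF r p x := by
  obtain ⟨u₀, hu₀⟩ := hx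
  have : Nonempty {u : X → U // SafeFor f XF u x} := ⟨⟨u₀, hu₀⟩⟩
  have hbdd : BddAbove (Set.range fun u : X → U => ret γ f r x u - p * risk γ f XF x u) := by
    refine ⟨C / (1 - γ), ?_⟩
    rintro _ ⟨u, rfl⟩
    have := mul_nonneg hp (risk_nonneg (f := f) (XF := XF) (x := x) (u := u) hγ0)
    linarith [(abs_le.1 (abs_ret_le (f := f) (x := x) (u := u) hγ0 hγ1 hC)).2]
  refine ciSup_le fun u => ?_
  calc ret γ f r x u = ret γ f r x u - p * risk γ f XF x u := by
        rw [risk_eq_zero_of_safeFor u.2, mul_zero, sub_zero]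
    _ ≤ Vpen γ f XF r p x := le_ciSup hbdd (u : X → U)

theorem infV_le_Vcon (hγ0 : 0 ≤ γ) (hγ1 : γ < 1) (hC : ∀ x a, |r x a| ≤ C)
    (hx : x ∈ viab f XF) : infV γ f XF r ≤ Vcon γ f XF r x := by
  refine csInf_le ⟨-(C / (1 - γ)), ?_⟩ ⟨x, hx, rfl⟩
  rintro _ ⟨y, ⟨u, hu⟩, rfl⟩
  exact (abs_le.1 (abs_ret_le hγ0 hγ1 hC)).1.trans (ret_le_Vcon hγ0 hγ1 hC hu)

theorem r_le_RXU (hC : ∀ x a, |r x a| ≤ C) (hx : x ∉ viab f XF) (a : U) : r x a ≤ RXU f XF r :=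
  le_csSup ⟨C, by rintro _ ⟨y, -, b, rfl⟩; exact (abs_le.1 (hC y b)).2⟩ ⟨x, hx, a, rfl⟩

theorem r_le_RQU (hC : ∀ x a, |r x a| ≤ C) (h : f x a ∉ viab f XF) : r x a ≤ RQU f XF r :=
  le_csSup ⟨C, by rintro _ ⟨q, -, rfl⟩; exact (abs_le.1 (hC q.1 q.2)).2⟩ ⟨(x, a), h, rfl⟩

theorem RQV_le_r (hC : ∀ x a, |r x a| ≤ C) (h : f x a ∈ viab f XF) : RQV f XF r ≤ r x a :=
  csInf_le ⟨-C, by rintro _ ⟨q, -, rfl⟩; exact (abs_le.1 (hC q.1 q.2)).1⟩ ⟨(x, a), h, rfl⟩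

theorem add_mul_ret_le_Vcon (hγ0 : 0 < γ) (hγ1 : γ < 1) (hC : ∀ x a, |r x a| ≤ C)
    (hxF : x ∉ XF) (hu : SafeFor f XF u (f x a)) :
    r x a + γ * ret γ f r (f x a) u ≤ Vcon γ f XF r x := by
  classical
  set v := Function.update u x a
  have hv : SafeFor f XF v x := hu.update hxF
  have hGv : ret γ f r x v = r x a + γ * ret γ f r (f x a) v := by
    rw [ret_succ hγ0.le hγ1 hC, show v x = a from Function.update_self x a u]
  by_cases hret : ∃ t, traj f u (f x a) t = x
  · set t₀ := Nat.find hret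
    have hu' : SafeFor f XF u x := Nat.find_spec hret ▸ hu.shift t₀
    have hdiff := ret_sub_ret_eq_of_eqOn (r := r) (v := v) hγ0.le hγ1 hC (n := t₀)
      fun s hs => Function.update_of_ne (Nat.find_min hret hs) a u
    rw [Nat.find_spec hret] at hdiff
    have hq0 : 0 ≤ γ ^ (t₀ + 1) := by positivity
    have hq1 : γ ^ (t₀ + 1) ≤ 1 := pow_le_one₀ hγ0.le hγ1.le
    calc r x a + γ * ret γ f r (f x a) u
        = (1 - γ ^ (t₀ + 1)) * ret γ f r x v + γ ^ (t₀ + 1) * ret γ f r x u := by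
          linear_combination -hGv - γ * hdiff
      _ ≤ (1 - γ ^ (t₀ + 1)) * Vcon γ f XF r x + γ ^ (t₀ + 1) * Vcon γ f XF r x :=
          add_le_add (mul_le_mul_of_nonneg_left (ret_le_Vcon hγ0.le hγ1 hC hv) (sub_nonneg.2 hq1))
            (mul_le_mul_of_nonneg_left (ret_le_Vcon hγ0.le hγ1 hC hu') hq0)
      _ = Vcon γ f XF r x := by ring
  · have hvu : ret γ f r (f x a) v = ret γ f r (f x a) u :=
      ret_eq_of_eqOn fun s => Function.update_of_ne (not_exists.1 hret s) a u
    rw [← hvu, ← hGv]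
    exact ret_le_Vcon hγ0.le hγ1 hC hv

theorem add_mul_Vcon_le (hγ0 : 0 < γ) (hγ1 : γ < 1) (hC : ∀ x a, |r x a| ≤ C)
    (hxF : x ∉ XF) (ha : f x a ∈ viab f XF) :
    r x a + γ * Vcon γ f XF r (f x a) ≤ Vcon γ f XF r x := by
  obtain ⟨u₀, hu₀⟩ := ha
  have : Nonempty {u : X → U // SafeFor f XF u (f x a)} := ⟨⟨u₀, hu₀⟩⟩
  have h : Vcon γ f XF r (f x a) ≤ (Vcon γ f XF r x - r x a) / γ :=
    ciSup_le fun u => (le_div_iff₀' hγ0).2 <| by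
      linarith [add_mul_ret_le_Vcon hγ0 hγ1 hC hxF u.2]
  rw [le_div_iff₀' hγ0] at h
  linarith

theorem RQV_add_mul_infV_le_Vcon (hγ0 : 0 < γ) (hγ1 : γ < 1) (hC : ∀ x a, |r x a| ≤ C)
    (hx : x ∈ viab f XF) : RQV f XF r + γ * infV γ f XF r ≤ Vcon γ f XF r x := by
  obtain ⟨u, hu⟩ := hx
  have hnext : f x (u x) ∈ viab f XF := ⟨u, hu.shift 1⟩
  calc RQV f XF r + γ * infV γ f XF r ≤ r x (u x) + γ * Vcon γ f XF r (f x (u x)) := by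
        gcongr
        · exact RQV_le_r hC hnext
        · exact infV_le_Vcon hγ0.le hγ1 hC hnext
    _ ≤ Vcon γ f XF r x := add_mul_Vcon_le hγ0 hγ1 hC (hu 0) hnext

end ValueFunctions

section Penalty

variable {X U : Type*} {f : X → U → X} {XF : Set X} {r : X → U → ℝ} {γ C p : ℝ} {Tf : ℕ}
  {u : X → U} {x : X}

def penaltyThreshold (γ : ℝ) (f : X → U → X) (XF : Set X) (r : X → U → ℝ) (Tf : ℕ) : ℝ :=
  (RXU f XF r * (1 - γ ^ (Tf + 1)) / (1 - γ)
    + (RQU f XF r - RQV f XF r) / γ - infV γ f XF r) / γ ^ Tf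

theorem ret_le_of_notMem_viab (hγ0 : 0 ≤ γ) (hγ1 : γ < 1) (hC : ∀ x a, |r x a| ≤ C)
    (habs : ∀ x ∈ XF, ∀ a : U, f x a ∈ XF) (hr0 : ∀ x ∈ XF, ∀ a : U, r x a = 0)
    (hx : x ∉ viab f XF) (hfail : ∃ t ≤ Tf, traj f u x t ∈ XF) :
    ret γ f r x u ≤ RXU f XF r * (1 - γ ^ (Tf + 1)) / (1 - γ) := by
  obtain ⟨s, hsT, hs⟩ := hfail
  have htail : ∀ t ∉ Finset.range (Tf + 1),
      γ ^ t * r (traj f u x t) (u (traj f u x t)) = 0 := fun t ht => by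
    rw [Finset.mem_range, not_lt] at ht
    rw [hr0 _ (traj_mem_of_le habs hs (by omega)), mul_zero]
  calc ret γ f r x u = ∑ t ∈ Finset.range (Tf + 1), γ ^ t * r (traj f u x t) (u (traj f u x t)) :=
        tsum_eq_sum htail
    _ ≤ ∑ t ∈ Finset.range (Tf + 1), γ ^ t * RXU f XF r :=
        Finset.sum_le_sum fun t _ => mul_le_mul_of_nonneg_left
          (r_le_RXU hC (traj_notMem_viab habs hx u t) _) (pow_nonneg hγ0 t)
    _ = RXU f XF r * (1 - γ ^ (Tf + 1)) / (1 - γ) := by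
        rw [← Finset.sum_mul, geom_sum_eq hγ1.ne, ← neg_div_neg_eq]
        ring

theorem ret_sub_mul_risk_lt_Vcon_of_next_notMem (hγ0 : 0 < γ) (hγ1 : γ < 1)
    (hC : ∀ x a, |r x a| ≤ C) (habs : ∀ x ∈ XF, ∀ a : U, f x a ∈ XF)
    (hr0 : ∀ x ∈ XF, ∀ a : U, r x a = 0)
    (hTf : ∀ x, x ∉ viab f XF → ∀ u : X → U, ∃ t ≤ Tf, traj f u x t ∈ XF)
    (hp0 : 0 ≤ p) (hp : penaltyThreshold γ f XF r Tf < p)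
    (hx : x ∈ viab f XF) (hnext : f x (u x) ∉ viab f XF) :
    ret γ f r x u - p * risk γ f XF x u < Vcon γ f XF r x := by
  set y := f x (u x)
  have hret := ret_le_of_notMem_viab hγ0.le hγ1 hC habs hr0 hnext (hTf y hnext u)
  have hrisk : γ ^ Tf ≤ risk γ f XF y u := by
    obtain ⟨s, hsT, hs⟩ := hTf y hnext u
    calc γ ^ Tf ≤ γ ^ s := pow_le_pow_of_le_one hγ0.le hγ1.le hsT
      _ ≤ γ ^ s / (1 - γ) := le_div_self (by positivity) (by linarith) (by linarith)
      _ ≤ risk γ f XF y u := pow_div_le_risk hγ0.le hγ1 habs hs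
  have hp' := (div_lt_iff₀ (pow_pos hγ0 Tf)).1 hp
  rw [ret_sub_mul_risk_succ hγ0.le hγ1 hC (notMem_of_mem_viab hx)]
  calc r x (u x) + γ * (ret γ f r y u - p * risk γ f XF y u)
      ≤ RQU f XF r + γ * (RXU f XF r * (1 - γ ^ (Tf + 1)) / (1 - γ) - p * γ ^ Tf) := by
        gcongr
        · exact r_le_RQU hC hnext
    _ < RQU f XF r + γ * (infV γ f XF r - (RQU f XF r - RQV f XF r) / γ) := by
        gcongr RQU f XF r + γ * ?_
        linarith
    _ = RQV f XF r + γ * infV γ f XF r := by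
        field_simp
        ring
    _ ≤ Vcon γ f XF r x := RQV_add_mul_infV_le_Vcon hγ0 hγ1 hC hx

theorem ret_sub_mul_risk_lt_Vcon (hγ0 : 0 < γ) (hγ1 : γ < 1)
    (hC : ∀ x a, |r x a| ≤ C) (habs : ∀ x ∈ XF, ∀ a : U, f x a ∈ XF)
    (hr0 : ∀ x ∈ XF, ∀ a : U, r x a = 0)
    (hTf : ∀ x, x ∉ viab f XF → ∀ u : X → U, ∃ t ≤ Tf, traj f u x t ∈ XF)
    (hp0 : 0 ≤ p) (hp : penaltyThreshold γ f XF r Tf < p) {n : ℕ}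
    (hx : x ∈ viab f XF) (hn : traj f u x n ∉ viab f XF) :
    ret γ f r x u - p * risk γ f XF x u < Vcon γ f XF r x := by
  induction n generalizing x with
  | zero => exact absurd hx hn
  | succ n ih =>
    by_cases hnext : f x (u x) ∈ viab f XF
    · rw [ret_sub_mul_risk_succ hγ0.le hγ1 hC (notMem_of_mem_viab hx)]
      calc r x (u x) + γ * (ret γ f r (f x (u x)) u - p * risk γ f XF (f x (u x)) u)
          < r x (u x) + γ * Vcon γ f XF r (f x (u x)) := by
            gcongr
            exact ih hnext (traj_succ' f u x n ▸ hn)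
        _ ≤ Vcon γ f XF r x := add_mul_Vcon_le hγ0 hγ1 hC (notMem_of_mem_viab hx) hnext
    · exact ret_sub_mul_risk_lt_Vcon_of_next_notMem hγ0 hγ1 hC habs hr0 hTf hp0 hp hx hnext

end Penalty

theorem large_penalty_yields_safe_optimal_maximizers_general {X U : Type*}
    (f : X → U → X) (XF : Set X) (γ : ℝ) (hγ0 : 0 < γ) (hγ1 : γ < 1)
    (r : X → U → ℝ) (hr : ∃ C : ℝ, ∀ x a, |r x a| ≤ C)
    (habs : ∀ x ∈ XF, ∀ a : U, f x a ∈ XF)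
    (hr0 : ∀ x ∈ XF, ∀ a : U, r x a = 0)
    (Tf : ℕ) (hTf : ∀ x, x ∉ viab f XF → ∀ u : X → U, ∃ t ≤ Tf, traj f u x t ∈ XF)
    (p : ℝ) (hp0 : 0 ≤ p)
    (hp : p > (RXU f XF r * (1 - γ ^ (Tf + 1)) / (1 - γ)
        + (RQU f XF r - RQV f XF r) / γ - infV γ f XF r) / γ ^ Tf) :
    ∀ x ∈ viab f XF, ∀ u : X → U,
      ret γ f r x u - p * risk γ f XF x u = Vpen γ f XF r p x →
        SafeFor f XF u x ∧ ret γ f r x u = Vcon γ f XF r x := by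
  obtain ⟨C, hC⟩ := hr
  intro x hx u hmax
  have hVcon_le := Vcon_le_Vpen hγ0.le hγ1 hC hp0 hx
  have hsafe : SafeFor f XF u x := fun t ht => by
    have hlt := ret_sub_mul_risk_lt_Vcon hγ0 hγ1 hC habs hr0 hTf hp0 hp hx
      (n := t) (u := u) fun h => notMem_of_mem_viab h ht
    exact (hmax ▸ hlt).not_ge hVcon_le
  refine ⟨hsafe, le_antisymm (ret_le_Vcon hγ0.le hγ1 hC hsafe) ?_⟩
  calc Vcon γ f XF r x ≤ Vpen γ f XF r p x := hVcon_le
    _ = ret γ f r x u := by rw [← hmax, risk_eq_zero_of_safeFor hsafe, mul_zero, sub_zero]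

/-- Main result: for any penalty larger than the finite threshold `p*`,
every maximizer of the penalized objective at a viable state is safe and
constrained-optimal. -/
theorem large_penalty_yields_safe_optimal_maximizers {X U : Type*} [Nonempty U]
    (f : X → U → X) (XF : Set X) (γ : ℝ) (hγ0 : 0 < γ) (hγ1 : γ < 1)
    (r : X → U → ℝ) (hr : ∃ C : ℝ, ∀ x a, |r x a| ≤ C)
    (habs : ∀ x ∈ XF, ∀ a : U, f x a ∈ XF) (hFne : XF.Nonempty)
    (hr0 : ∀ x ∈ XF, ∀ a : U, r x a = 0)
    (hVne : (viab f XF).Nonempty) (hUne : ((viab f XF)ᶜ).Nonempty)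
    (Tf : ℕ) (hTf : ∀ x, x ∉ viab f XF → ∀ u : X → U, ∃ t ≤ Tf, traj f u x t ∈ XF)
    (p : ℝ) (hp0 : 0 ≤ p)
    (hp : p > (RXU f XF r * (1 - γ ^ (Tf + 1)) / (1 - γ)
        + (RQU f XF r - RQV f XF r) / γ - infV γ f XF r) / γ ^ Tf) :
    ∀ x ∈ viab f XF, ∀ u : X → U,
      ret γ f r x u - p * risk γ f XF x u = Vpen γ f XF r p x →
        SafeFor f XF u x ∧ ret γ f r x u = Vcon γ f XF r x :=
  large_penalty_yields_safe_optimal_maximizers_general f XF γ hγ0 hγ1 r hr habs hr0 Tf hTf p hp0 hp
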